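/- For κ ∈ I_n let q_κ^{[i]} := (n,κ(n))∘(n−1,κ(n−1))∘⋯∘(i,κ(i)) ∈ S_n (composition with rightmost factor applied first; (j,j) is the identity). Then for arbitrary n×n matrices C_1,…,C_n over A, ⟨⟨C_1,…,C_n⟩⟩ = ∑_{κ∈I_n} α(κ)·P_{1,κ(1)}·P_{2,κ(2)}⋯P_{n,κ(n)}·C_1^(q_κ^{[1]}(1))·C_2^(q_κ^{[2]}(2))⋯C_n^(q_κ^{[n]}(n)), where q_κ^{[i]}(i) denotes the image of i under q_κ^{[i]}. -/

import Mathlib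

/-!
STATEMENT 9: With q_κ^{[i]} := (n,κ(n))∘(n−1,κ(n−1))∘⋯∘(i,κ(i)),
⟨⟨C_1,…,C_n⟩⟩ = ∑_{κ∈I_n} α(κ)·P_{1,κ(1)}⋯P_{n,κ(n)}·C_1^(q_κ^{[1]}(1))⋯C_n^(q_κ^{[n]}(n)).
The point `i : Fin n` carries the label `i+1 ∈ {1,…,n}`.
-/

noncomputable section

abbrev K : Type := RatFunc ℚ

def u : K := RatFunc.X

/-- Operators on the n-fold tensor power of K^n with coefficients in A. -/
abbrev Op (A : Type*) (n : ℕ) := Matrix (Fin n → Fin n) (Fin n → Fin n) A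

variable {A : Type*} [Ring A] [Algebra K A] {n : ℕ}

/-- `act C s` = C^(s): the matrix C acting on the s-th tensor factor. -/
def act (C : Matrix (Fin n) (Fin n) A) (s : Fin n) : Op A n :=
  fun f g => if ∀ t, t ≠ s → f t = g t then C (f s) (g s) else 0

/-- `Pop σ` = P_σ: permutation of the tensor factors according to σ. -/
def Pop (σ : Equiv.Perm (Fin n)) : Op A n :=
  fun f g => if f = g ∘ ⇑σ⁻¹ then (1 : A) else 0

/-- P_{ij} (with P_{ii} = Id). -/
def Pij (i j : Fin n) : Op A n := Pop (Equiv.swap i j)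

/-- Π_k = 1 − (2u−k−n+2)⁻¹ ∑_{i=k+1}^n P_{ki}, with label k+1. -/
def Piop (k : Fin n) : Op A n :=
  (1 : Op A n) -
    ((2 * u - ((k : ℕ) + 1 : K) - (n : K) + 2)⁻¹ : K) •
      ∑ i ∈ Finset.univ.filter (fun i => k < i), Pij k i

/-- ⟨⟨C_1,…,C_n⟩⟩ = C_1^(1)·Π_1·C_2^(2)·Π_2⋯Π_{n−1}·C_n^(n). -/
def braket (C : Fin n → Matrix (Fin n) (Fin n) A) : Op A n :=
  ((List.finRange n).map (fun s => act (C s) s * Piop s)).prod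

/-- I_n: the tuples κ with i ≤ κ(i) for all i. -/
def In (n : ℕ) : Finset (Fin n → Fin n) :=
  Finset.univ.filter (fun κ => ∀ i, i ≤ κ i)

/-- α(κ) = ∏_{i : i < κ(i)} (n−2u−2+i)⁻¹, with label i+1. -/
def alphaK (κ : Fin n → Fin n) : K :=
  ∏ i ∈ Finset.univ.filter (fun i => i < κ i), ((n : K) - 2 * u - 2 + ((i : ℕ) + 1 : K))⁻¹

/-- q_κ^{[i]} = (n,κ(n))∘(n−1,κ(n−1))∘⋯∘(i,κ(i)), rightmost factor applied first. -/
def qk (κ : Fin n → Fin n) (i : Fin n) : Equiv.Perm (Fin n) :=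
  ((((List.finRange n).filter (fun j => decide (i ≤ j))).reverse).map
    (fun j => Equiv.swap j (κ j))).prod


/-!
Write `Π_k = ∑_{j ≥ k} β_{kj} P_{kj}` with `β_{kk} = 1` and multiply out the product defining
`⟨⟨C_1,…,C_n⟩⟩`. The term indexed by `κ` has scalar `∏_k β_{k,κ(k)} = α(κ)` and operator
`∏_k C_k^(k) P_{k,κ(k)}`. Moving the permutations to the left with `C^(s) P_σ = P_σ C^(σ⁻¹ s)`,
the factor `C_k^(k)` passes `P_{k,κ(k)} ⋯ P_{n,κ(n)}`, the permutation operator of `(q_κ^{[k]})⁻¹`.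
-/

theorem List.prod_map_smul {ι S M : Type*} [Monoid S] [Monoid M] [MulAction S M]
    [IsScalarTower S M M] [SMulCommClass S M M] (l : List ι) (c : ι → S) (x : ι → M) :
    (l.map fun i => c i • x i).prod = (l.map c).prod • (l.map x).prod := by
  induction l with
  | nil => simp
  | cons a l ih => simp only [List.map_cons, List.prod_cons, ih, smul_mul_smul_comm]

theorem List.prod_ofFn_sum {R β : Type*} [Semiring R] [Fintype β] :
    ∀ {m : ℕ} (f : Fin m → β → R),
      (List.ofFn fun i => ∑ j, f i j).prod = ∑ κ : Fin m → β, (List.ofFn fun i => f i (κ i)).prod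
  | 0, f => by simp
  | m + 1, f => by
    rw [← (Fin.consEquiv fun _ => β).sum_comp, Fintype.sum_prod_type]
    simp only [List.ofFn_succ, List.prod_cons, List.prod_ofFn_sum fun i => f i.succ,
      Finset.sum_mul_sum]
    rfl

theorem qk_eq_inv (κ : Fin n → Fin n) (i : Fin n) :
    qk κ i = (((List.finRange n).filter (i ≤ ·)).map fun j => Equiv.swap j (κ j)).prod⁻¹ := by
  simp [qk, List.prod_inv_reverse, List.map_reverse, Function.comp_def]

section Operators

variable {R : Type*} [Ring R]

theorem Pop_mul_apply (σ : Equiv.Perm (Fin n)) (M : Op R n) (f g : Fin n → Fin n) :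
    (Pop σ * M : Op R n) f g = M (f ∘ σ) g := by
  have hσ : ∀ h : Fin n → Fin n, f = h ∘ ⇑σ⁻¹ ↔ h = f ∘ σ := fun h => by
    constructor <;> rintro rfl <;> funext t <;> simp
  simp only [Matrix.mul_apply, Pop, ite_mul, one_mul, zero_mul, hσ]
  simp

theorem mul_Pop_apply (M : Op R n) (σ : Equiv.Perm (Fin n)) (f g : Fin n → Fin n) :
    (M * Pop σ : Op R n) f g = M f (g ∘ ⇑σ⁻¹) := by
  simp [Matrix.mul_apply, Pop]

theorem Pop_one : (Pop 1 : Op R n) = 1 := by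
  ext f g
  simp [Pop, Matrix.one_apply]

theorem Pop_mul (σ τ : Equiv.Perm (Fin n)) : (Pop (σ * τ) : Op R n) = Pop σ * Pop τ := by
  ext f g
  rw [Pop_mul_apply]
  simp only [Pop, mul_inv_rev, Equiv.Perm.coe_mul]
  refine if_congr ⟨fun h => ?_, fun h => ?_⟩ rfl rfl <;> funext t
  · simpa using congrFun h (σ t)
  · simpa using congrFun h (σ⁻¹ t)

theorem Pop_list_prod (l : List (Equiv.Perm (Fin n))) :
    (Pop l.prod : Op R n) = (l.map Pop).prod :=
  map_list_prod ({ toFun := Pop, map_one' := Pop_one, map_mul' := Pop_mul } :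
    Equiv.Perm (Fin n) →* Op R n) l

theorem Pij_self (i : Fin n) : (Pij i i : Op R n) = 1 := by
  rw [Pij, Equiv.swap_self, Equiv.Perm.one_def.symm, Pop_one]

theorem act_mul_Pop (C : Matrix (Fin n) (Fin n) R) (s : Fin n) (σ : Equiv.Perm (Fin n)) :
    act C s * Pop σ = Pop σ * act C (σ⁻¹ s) := by
  ext f g
  rw [mul_Pop_apply, Pop_mul_apply]
  simp only [act, Function.comp_apply]
  refine if_congr ⟨fun h t ht => ?_, fun h t ht => ?_⟩ (by simp) rfl
  · simpa using h (σ t) (by rintro rfl; simp at ht)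
  · simpa using h (σ⁻¹ t) (fun h' => ht (σ⁻¹.injective h'))

theorem list_prod_act_mul_Pop {l : List (Fin n)} (hl : l.Pairwise (· < ·))
    (C : Fin n → Matrix (Fin n) (Fin n) R) (σ : Fin n → Equiv.Perm (Fin n)) :
    (l.map fun s => act (C s) s * Pop (σ s)).prod =
      Pop (l.map σ).prod *
        (l.map fun s => act (C s) (((l.filter (s ≤ ·)).map σ).prod⁻¹ s)).prod := by
  induction l with
  | nil => simp [Pop_one]
  | cons a l ih =>
    obtain ⟨ha, hl⟩ := List.pairwise_cons.mp hl
    have hfilter_a : (a :: l).filter (a ≤ ·) = a :: l := by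
      simpa using fun b hb => (ha b hb).le
    have hfilter_l : ∀ s ∈ l, (a :: l).filter (s ≤ ·) = l.filter (s ≤ ·) := fun s hs => by
      simp [not_le.mpr (ha s hs)]
    rw [List.map_cons, List.prod_cons, ih hl, ← mul_assoc, mul_assoc _ (Pop (σ a)), ← Pop_mul,
      act_mul_Pop, List.map_cons, List.prod_cons, List.map_cons, List.prod_cons, hfilter_a,
      List.map_cons, List.prod_cons, mul_assoc]
    congr 3
    exact List.map_congr_left fun s hs => by rw [hfilter_l s hs]

theorem list_prod_act_mul_Pij (C : Fin n → Matrix (Fin n) (Fin n) R) (κ : Fin n → Fin n) :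
    ((List.finRange n).map fun s => act (C s) s * Pij s (κ s)).prod =
      ((List.finRange n).map fun s => Pij s (κ s)).prod *
        ((List.finRange n).map fun s => act (C s) (qk κ s s)).prod := by
  simp only [Pij]
  rw [list_prod_act_mul_Pop (List.pairwise_lt_finRange n) C fun s => Equiv.swap s (κ s),
    Pop_list_prod, List.map_map]
  simp only [qk_eq_inv, Function.comp_def]

end Operators

def piopCoeff (k j : Fin n) : K :=
  if j = k then 1 else if k < j then ((n : K) - 2 * u - 2 + ((k : ℕ) + 1 : K))⁻¹ else 0

theorem Piop_eq_sum (k : Fin n) : (Piop k : Op A n) = ∑ j, piopCoeff k j • Pij k j := by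
  set γ : K := ((n : K) - 2 * u - 2 + ((k : ℕ) + 1 : K))⁻¹ with hγ_def
  have hterm : ∀ j, piopCoeff k j • (Pij k j : Op A n) =
      (if k = j then 1 else 0) + if k < j then γ • Pij k j else 0 := fun j => by
    rcases lt_trichotomy j k with h | rfl | h
    · simp [piopCoeff, h.ne, h.ne', not_lt.mpr h.le]
    · simp [piopCoeff, Pij_self]
    · simp [piopCoeff, h.ne, h.ne', h, γ]
  have hγ : γ = -(2 * u - ((k : ℕ) + 1 : K) - (n : K) + 2)⁻¹ := by
    rw [hγ_def, ← inv_neg]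
    ring_nf
  rw [Finset.sum_congr rfl fun j _ => hterm j, Finset.sum_add_distrib, Finset.sum_ite_eq,
    ← Finset.sum_filter, ← Finset.smul_sum, hγ, neg_smul, ← sub_eq_add_neg, Piop]
  simp

theorem prod_piopCoeff (κ : Fin n → Fin n) :
    ∏ s, piopCoeff s (κ s) = if ∀ i, i ≤ κ i then alphaK κ else 0 := by
  split_ifs with hκ
  · rw [alphaK, Finset.prod_filter]
    refine Finset.prod_congr rfl fun s _ => ?_
    rcases (hκ s).eq_or_lt with h | h
    · simp [piopCoeff, ← h]
    · simp [piopCoeff, h, h.ne']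
  · push Not at hκ
    obtain ⟨s, hs⟩ := hκ
    exact Finset.prod_eq_zero (Finset.mem_univ s) (by simp [piopCoeff, hs.ne, not_lt.mpr hs.le])

theorem braket_eq_sum (C : Fin n → Matrix (Fin n) (Fin n) A) :
    braket C = ∑ κ : Fin n → Fin n, (∏ s, piopCoeff s (κ s)) •
      ((List.finRange n).map fun s => act (C s) s * Pij s (κ s)).prod := by
  simp only [braket, Piop_eq_sum, Finset.mul_sum, mul_smul_comm, ← List.ofFn_eq_map,
    List.prod_ofFn_sum]
  simp only [List.ofFn_eq_map, List.prod_map_smul, Fin.prod_univ_def]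

theorem braket_eq_sum_qk_general (C : Fin n → Matrix (Fin n) (Fin n) A) :
    braket C =
      ∑ κ ∈ In n, alphaK κ •
        (((List.finRange n).map (fun s => Pij s (κ s))).prod *
          ((List.finRange n).map (fun s => act (C s) (qk κ s s))).prod) := by
  simp only [braket_eq_sum, prod_piopCoeff, ite_smul, zero_smul, ← Finset.sum_filter,
    list_prod_act_mul_Pij, In]

theorem braket_eq_sum_qk (hn : 1 ≤ n) (C : Fin n → Matrix (Fin n) (Fin n) A) :
    braket C =
      ∑ κ ∈ In n, alphaK κ •
        (((List.finRange n).map (fun s => Pij s (κ s))).prod *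
          ((List.finRange n).map (fun s => act (C s) (qk κ s s))).prod) :=
  braket_eq_sum_qk_general C

end
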